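/- arXiv:2307.05918 — 6 statements merged into one kernel-verified Lean document; each statement's English description precedes it below -/
import Mathlib

section
/- If a new edge (a,b) is inserted into graph G producing G', then for any two vertices v and u, if the shortest distance between v and u differs between G and G', every shortest path between v and u in G' passes through the edge (a,b). -/
theorem stmt_1 {V : Type*} (G : SimpleGraph V) (a b : V) (hab : a ≠ b)
    (G' : SimpleGraph V) (hG' : G' = G ⊔ SimpleGraph.edge a b) (v u : V)
    (hdist : G'.edist v u ≠ G.edist v u) :
    ∀ p : G'.Walk v u, p.IsPath → (∀ q : G'.Walk v u, p.length ≤ q.length) →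
      s(a, b) ∈ p.edges := by
  intro p hp hmin
  by_contra hmem
  -- every edge of p lies in G
  have hsub : ∀ e ∈ p.edges, e ∈ G.edgeSet := by
    intro e he
    have : e ∈ G'.edgeSet := p.edges_subset_edgeSet he
    rw [hG', SimpleGraph.edgeSet_sup, SimpleGraph.edge_edgeSet_of_ne hab] at this
    rcases this with h | h
    · exact h
    · exact absurd (h ▸ he) hmem
  have hq : G.edist v u ≤ p.length := by
    simpa using SimpleGraph.edist_le (p.transfer G hsub)
  have hle : G'.edist v u ≤ G.edist v u := by
    apply SimpleGraph.edist_anti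
    rw [hG']; exact le_sup_left
  have hge : (p.length : ℕ∞) ≤ G'.edist v u := by
    rw [SimpleGraph.edist, le_iInf_iff]
    intro r
    exact_mod_cast hmin r
  exact hdist (le_antisymm hle (hq.trans hge))
end

section
/- Let G contain edge (a,b) and let G' = G minus (a,b). If dist_G(v,a) = dist_G(v,b), then for every vertex u, dist_{G'}(v,u) = dist_G(v,u) and spc_{G'}(v,u) = spc_G(v,u); i.e., vertex v is unaffected by the deletion. -/
/-- The number of shortest paths between `v` and `u` in `G`. -/
noncomputable def spc {V : Type*} (G : SimpleGraph V) (v u : V) : ℕ :=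
  {p : G.Walk v u | p.IsPath ∧ p.length = G.dist v u}.ncard

/-!
Along a shortest walk from `v` the distance to `v` grows by exactly one at every step, so such a
walk never uses an edge whose endpoints are equidistant from `v`, in particular never `s(a, b)`.
Hence every shortest `v`–`u` walk of `G` survives in `G'`, and a subgraph containing all shortest
`v`–`u` walks has the same distance and, via the injective inclusion of walks, the same shortest
paths from `v` to `u`.
-/

namespace SimpleGraph

variable {V : Type*} {G H : SimpleGraph V} {v w x u : V}

lemma edist_eq_add_one_of_adj_of_add_length_eq {n : ℕ} (h : G.Adj w x) (q : G.Walk x u)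
    (hw : G.edist v w = n) (hq : n + 1 + q.length = G.edist v u) :
    G.edist v x = n + 1 := by
  refine le_antisymm ?_ ?_
  · calc G.edist v x ≤ G.edist v w + G.edist w x := G.edist_triangle
      _ ≤ n + 1 := by rw [hw]; gcongr; exact G.edist_le h.toWalk
  · have : (n + 1 : ℕ∞) + q.length ≤ G.edist v x + q.length :=
      calc (n + 1 : ℕ∞) + q.length = G.edist v u := hq
        _ ≤ G.edist v x + G.edist x u := G.edist_triangle
        _ ≤ G.edist v x + q.length := by gcongr; exact G.edist_le q
    exact (WithTop.add_le_add_iff_right (ENat.natCast_ne_top _)).mp this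

theorem Walk.edist_ne_of_mem_edges_of_add_length_eq {n : ℕ} (p : G.Walk w u)
    (hw : G.edist v w = n) (hp : n + p.length = G.edist v u) {y z : V}
    (he : s(y, z) ∈ p.edges) : G.edist v y ≠ G.edist v z := by
  induction p generalizing n with
  | nil => simp at he
  | @cons w x u h q ih =>
    have hq : (n + 1 : ℕ) + (q.length : ℕ∞) = G.edist v u := by
      rw [← hp, Walk.length_cons]; push_cast; ring
    have hx : G.edist v x = (n + 1 : ℕ) := by
      push_cast at hq ⊢; exact edist_eq_add_one_of_adj_of_add_length_eq h q hw hq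
    rw [Walk.edges_cons, List.mem_cons] at he
    rcases he with he | he
    · rcases Sym2.eq_iff.mp he with ⟨rfl, rfl⟩ | ⟨rfl, rfl⟩
      · rw [hw, hx]; exact_mod_cast n.succ_ne_self.symm
      · rw [hw, hx]; exact_mod_cast n.succ_ne_self
    · exact ih hx hq he

lemma edist_eq_of_le_of_geodesics_mem (hle : H ≤ G)
    (hgeo : ∀ p : G.Walk v u, p.length = G.edist v u → ∀ e ∈ p.edges, e ∈ H.edgeSet) :
    H.edist v u = G.edist v u := by
  refine le_antisymm ?_ (edist_anti hle)
  by_cases hr : G.edist v u = ⊤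
  · exact hr ▸ le_top
  obtain ⟨p, hp⟩ := exists_walk_of_edist_ne_top hr
  calc H.edist v u ≤ (p.transfer H (hgeo p hp)).length := H.edist_le _
    _ = G.edist v u := by rw [Walk.length_transfer, hp]

lemma spc_eq_of_le_of_geodesics_mem (hle : H ≤ G)
    (hgeo : ∀ p : G.Walk v u, p.length = G.edist v u → ∀ e ∈ p.edges, e ∈ H.edgeSet) :
    spc H v u = spc G v u := by
  have hdist : H.dist v u = G.dist v u := by
    rw [dist, dist, edist_eq_of_le_of_geodesics_mem hle hgeo]
  have himage : {p : G.Walk v u | p.IsPath ∧ p.length = G.dist v u} =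
      Walk.map (.ofLE hle) '' {p : H.Walk v u | p.IsPath ∧ p.length = H.dist v u} := by
    ext p
    constructor
    · rintro ⟨hpath, hlen⟩
      have hp : (p.length : ℕ∞) = G.edist v u := by
        rw [hlen, Reachable.coe_dist_eq_edist ⟨p⟩]
      refine ⟨p.transfer H (hgeo p hp), ⟨hpath.transfer _, ?_⟩, ?_⟩
      · rw [Walk.length_transfer, hlen, hdist]
      · rw [← Walk.transfer_eq_map_ofLE, Walk.transfer_transfer, Walk.transfer_self]
        simpa using p.edges_subset_edgeSet
    · rintro ⟨q, ⟨hpath, hlen⟩, rfl⟩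
      exact ⟨hpath.map Function.injective_id, by rw [Walk.length_map, hlen, hdist]⟩
  rw [spc, spc, himage,
    Set.ncard_image_of_injective _ (Walk.map_injective_of_injective Function.injective_id v u)]

end SimpleGraph

open SimpleGraph in
theorem stmt_9_general {V : Type*} (G : SimpleGraph V) (a b : V)
    (G' : SimpleGraph V) (hG' : G' = G.deleteEdges {s(a, b)}) (v : V)
    (heq : G.edist v a = G.edist v b) :
    ∀ u : V, G'.edist v u = G.edist v u ∧ spc G' v u = spc G v u := by
  intro u
  have hgeo : ∀ p : G.Walk v u, p.length = G.edist v u → ∀ e ∈ p.edges, e ∈ G'.edgeSet := by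
    intro p hp e he
    rw [hG', edgeSet_deleteEdges, Set.mem_sdiff, Set.mem_singleton_iff]
    refine ⟨p.edges_subset_edgeSet he, ?_⟩
    rintro rfl
    exact p.edist_ne_of_mem_edges_of_add_length_eq (n := 0) (by simp) (by simpa using hp) he heq
  have hle : G' ≤ G := hG' ▸ G.deleteEdges_le _
  exact ⟨edist_eq_of_le_of_geodesics_mem hle hgeo, spc_eq_of_le_of_geodesics_mem hle hgeo⟩

theorem stmt_9 {V : Type*} (G : SimpleGraph V) (a b : V) (hadj : G.Adj a b)
    (G' : SimpleGraph V) (hG' : G' = G.deleteEdges {s(a, b)}) (v : V)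
    (heq : G.edist v a = G.edist v b) :
    ∀ u : V, G'.edist v u = G.edist v u ∧ spc G' v u = spc G v u :=
  stmt_9_general G a b G' hG' v heq
end

section
/- Let G' = G minus edge (a,b) with dist_G(v,a) + 1 = dist_G(v,b). If spc_G(v,a) < spc_G(v,b), then dist_{G'}(v,b) = dist_G(v,b) and spc_{G'}(v,b) = spc_G(v,b) − spc_G(v,a). -/
namespace SimpleGraph

variable {V : Type*} {G : SimpleGraph V} {u v w : V}

def shortestPaths (G : SimpleGraph V) (u v : V) : Set (G.Walk u v) :=
  {p | p.IsPath ∧ p.length = G.dist u v}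

theorem spc_eq_ncard_shortestPaths (G : SimpleGraph V) (u v : V) :
    spc G u v = (G.shortestPaths u v).ncard := rfl

namespace Walk

theorem notMem_support_of_length_lt_dist (p : G.Walk u v) (h : p.length < G.dist u w) :
    w ∉ p.support := by
  classical
  exact fun hw => ((G.dist_le (p.takeUntil w hw)).trans (p.length_takeUntil_le_length hw)).not_gt h

theorem IsPath.exists_eq_cons_of_mem_edges {p : G.Walk u v} (hp : p.IsPath) (hadj : G.Adj u w)
    (he : s(u, w) ∈ p.edges) : ∃ q : G.Walk w v, p = cons hadj q := by
  cases p with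
  | nil => simp at he
  | cons h q =>
    rw [cons_isPath_iff] at hp
    rcases List.mem_cons.mp he with he | he
    · obtain rfl : w = _ := by
        rcases Sym2.eq_iff.mp he with ⟨-, h'⟩ | ⟨h', -⟩
        · exact h'
        · exact absurd h' h.ne
      exact ⟨q, rfl⟩
    · exact absurd (q.fst_mem_support_of_mem_edges he) hp.2

theorem IsPath.exists_eq_concat_of_mem_edges {p : G.Walk u v} (hp : p.IsPath) (hadj : G.Adj w v)
    (he : s(w, v) ∈ p.edges) : ∃ q : G.Walk u w, p = q.concat hadj := by
  obtain ⟨q, hq⟩ := hp.reverse.exists_eq_cons_of_mem_edges hadj.symm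
    (by rwa [edges_reverse, List.mem_reverse, Sym2.eq_swap])
  refine ⟨q.reverse, reverse_injective ?_⟩
  rw [reverse_concat, reverse_reverse, hq]

end Walk

theorem concat_image_shortestPaths {a b : V} (hadj : G.Adj a b)
    (hd : G.dist v a + 1 = G.dist v b) :
    (fun p => p.concat hadj) '' G.shortestPaths v a =
      G.shortestPaths v b ∩ {q | s(a, b) ∈ q.edges} := by
  ext q
  constructor
  · rintro ⟨p, ⟨hp, hlen⟩, rfl⟩
    refine ⟨⟨hp.concat (p.notMem_support_of_length_lt_dist (by omega)) hadj, ?_⟩, ?_⟩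
    · rw [Walk.length_concat, hlen, hd]
    · simp [Walk.edges_concat]
  · rintro ⟨⟨hq, hlen⟩, he⟩
    obtain ⟨p, rfl⟩ := hq.exists_eq_concat_of_mem_edges hadj he
    refine ⟨p, ⟨((Walk.concat_isPath_iff hadj).mp hq).1, ?_⟩, rfl⟩
    rw [Walk.length_concat] at hlen
    omega

theorem ncard_shortestPaths_inter_mem_edges {a b : V} (hadj : G.Adj a b)
    (hd : G.dist v a + 1 = G.dist v b) :
    (G.shortestPaths v b ∩ {q | s(a, b) ∈ q.edges}).ncard = spc G v a := by
  rw [← concat_image_shortestPaths hadj hd, spc_eq_ncard_shortestPaths,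
    Set.ncard_image_of_injective _ fun p q h => by obtain ⟨_, rfl⟩ := Walk.concat_inj h; rfl]

theorem edist_deleteEdges_eq_of_notMem_edges {e : Sym2 V} {p : G.Walk u v}
    (hp : p.length = G.dist u v) (he : e ∉ p.edges) :
    (G.deleteEdges {e}).edist u v = G.edist u v := by
  refine le_antisymm ?_ (edist_anti (G.deleteEdges_le _))
  calc (G.deleteEdges {e}).edist u v ≤ (p.toDeleteEdge e he).length := edist_le _
    _ = G.edist u v := by
      rw [Walk.length_transfer, hp, p.reachable.coe_dist_eq_edist]

theorem mapLe_image_shortestPaths_deleteEdges {e : Sym2 V}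
    (hd : (G.deleteEdges {e}).dist u v = G.dist u v) :
    Walk.mapLe (G.deleteEdges_le {e}) '' (G.deleteEdges {e}).shortestPaths u v =
      G.shortestPaths u v \ {p | e ∈ p.edges} := by
  ext p
  constructor
  · rintro ⟨q, ⟨hq, hlen⟩, rfl⟩
    refine ⟨⟨hq.mapLe _, by rw [Walk.length_mapLe, hlen, hd]⟩, fun he => ?_⟩
    rw [Set.mem_ofPred_eq, Walk.edges_mapLe_eq_edges] at he
    exact (edgeSet_deleteEdges .. ▸ q.edges_subset_edgeSet he).2 rfl
  · rintro ⟨⟨hp, hlen⟩, he⟩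
    refine ⟨p.toDeleteEdge e he, ⟨hp.transfer _, ?_⟩, Walk.map_toDeleteEdges_eq _ _⟩
    rw [Walk.length_transfer, hlen, hd]

theorem spc_deleteEdges_eq {e : Sym2 V} (hd : (G.deleteEdges {e}).dist u v = G.dist u v) :
    spc (G.deleteEdges {e}) u v = (G.shortestPaths u v \ {p | e ∈ p.edges}).ncard := by
  rw [spc_eq_ncard_shortestPaths, ← mapLe_image_shortestPaths_deleteEdges hd,
    Set.ncard_image_of_injective _
      (Walk.map_injective_of_injective (f := Hom.ofLE (G.deleteEdges_le _)) (fun _ _ h => h) u v)]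

end SimpleGraph

open SimpleGraph

theorem stmt_12_general {V : Type*} (G : SimpleGraph V) (a b : V) (hadj : G.Adj a b)
    (G' : SimpleGraph V) (hG' : G' = G.deleteEdges {s(a, b)}) (v : V)
    (hd : G.dist v a + 1 = G.dist v b) (hc : spc G v a < spc G v b) :
    G'.edist v b = G.edist v b ∧ spc G' v b = spc G v b - spc G v a := by
  subst hG'
  have hfin : (G.shortestPaths v b).Finite :=
    Set.finite_of_ncard_pos (by rw [← spc_eq_ncard_shortestPaths]; omega)
  have hsplit := Set.ncard_inter_add_ncard_sdiff_eq_ncard _ {q | s(a, b) ∈ q.edges} hfin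
  rw [ncard_shortestPaths_inter_mem_edges hadj hd, ← spc_eq_ncard_shortestPaths] at hsplit
  obtain ⟨q, ⟨-, hq⟩, hqe⟩ : (G.shortestPaths v b \ {q | s(a, b) ∈ q.edges}).Nonempty :=
    Set.nonempty_of_ncard_ne_zero (by omega)
  have hedist := edist_deleteEdges_eq_of_notMem_edges hq hqe
  refine ⟨hedist, ?_⟩
  rw [spc_deleteEdges_eq (congrArg ENat.toNat hedist)]
  omega

theorem stmt_12 {V : Type*} (G : SimpleGraph V) (a b : V) (hadj : G.Adj a b)
    (G' : SimpleGraph V) (hG' : G' = G.deleteEdges {s(a, b)}) (v : V)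
    (hreach : G.Reachable v a)
    (hd : G.dist v a + 1 = G.dist v b) (hc : spc G v a < spc G v b) :
    G'.edist v b = G.edist v b ∧ spc G' v b = spc G v b - spc G v a :=
  stmt_12_general G a b hadj G' hG' v hd hc
end

section
/- Suppose edge (a,b) is deleted from G producing G', and let v, u be vertices with dist_G(v,a) + 1 = dist_G(v,b) and dist_G(u,a) + 1 = dist_G(u,b) (both on the 'a-side'). Then dist_{G'}(v,u) = dist_G(v,u) and spc_{G'}(v,u) = spc_G(v,u). -/
namespace SimpleGraph

variable {V : Type*} {G H : SimpleGraph V} {v u a b : V}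

namespace Walk

lemma dist_add_dist_getVert_succ_lt_length (p : G.Walk v u) {i : ℕ} (hi : i < p.length) :
    G.dist v (p.getVert i) + G.dist (p.getVert (i + 1)) u < p.length := by
  have hfront := G.dist_le (p.take i)
  have hback := G.dist_le (p.drop (i + 1))
  rw [take_length] at hfront
  rw [drop_length] at hback
  omega

lemma dist_add_dist_lt_length_of_mem_edges (p : G.Walk v u) (he : s(a, b) ∈ p.edges) :
    G.dist v a + G.dist b u < p.length ∨ G.dist v b + G.dist a u < p.length := by
  obtain ⟨i, hi, hedge⟩ := p.mk_mem_edges_iff_exists.mp he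
  have hlt := p.dist_add_dist_getVert_succ_lt_length hi
  rcases Sym2.eq_iff.mp hedge with ⟨rfl, rfl⟩ | ⟨rfl, rfl⟩
  · exact .inl hlt
  · exact .inr hlt

lemma mk_notMem_edges_of_length_eq_dist (hv : G.dist v a + 1 = G.dist v b)
    (hu : G.dist u a + 1 = G.dist u b) (p : G.Walk v u) (hp : p.length = G.dist v u) :
    s(a, b) ∉ p.edges := by
  classical
  intro he
  have hva : G.Reachable v a := (p.takeUntil a (p.fst_mem_support_of_mem_edges he)).reachable
  have htri := hva.dist_triangle_left u
  have hau : G.dist a u = G.dist u a := dist_comm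
  have hbu : G.dist b u = G.dist u b := dist_comm
  rcases p.dist_add_dist_lt_length_of_mem_edges he with h | h <;> omega

end Walk

section Subgraph

variable (hHG : H ≤ G)
  (hshort : ∀ p : G.Walk v u, p.length = G.dist v u → ∀ e ∈ p.edges, e ∈ H.edgeSet)
include hHG hshort

lemma edist_eq_of_forall_shortest_walk_edges_mem : H.edist v u = G.edist v u := by
  refine le_antisymm ?_ (edist_anti hHG)
  by_cases hr : G.Reachable v u
  · obtain ⟨p, hp⟩ := hr.exists_walk_length_eq_dist
    calc H.edist v u ≤ (p.transfer H (hshort p hp)).length := edist_le _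
      _ = G.edist v u := by rw [Walk.length_transfer, hp, hr.coe_dist_eq_edist]
  · simp [edist_eq_top_of_not_reachable hr]

lemma spc_eq_of_forall_shortest_walk_edges_mem : spc H v u = spc G v u := by
  have hdist : H.dist v u = G.dist v u := by
    rw [dist, dist, edist_eq_of_forall_shortest_walk_edges_mem hHG hshort]
  have himage : {p : G.Walk v u | p.IsPath ∧ p.length = G.dist v u} =
      Walk.mapLe hHG '' {p : H.Walk v u | p.IsPath ∧ p.length = H.dist v u} := by
    ext p
    constructor
    · rintro ⟨hpath, hlen⟩
      refine ⟨p.transfer H (hshort p hlen), ⟨hpath.transfer _, by simp [hlen, hdist]⟩, ?_⟩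
      rw [Walk.mapLe, ← Walk.transfer_eq_map_ofLE, Walk.transfer_transfer, Walk.transfer_self]
      exact fun e he => p.edges_subset_edgeSet (by simpa using he)
    · rintro ⟨q, ⟨hpath, hlen⟩, rfl⟩
      exact ⟨hpath.mapLe hHG, by simp [hlen, hdist]⟩
  rw [spc, spc, himage,
    Set.ncard_image_of_injective _ (Walk.map_injective_of_injective (fun _ _ => id) v u)]

end Subgraph

end SimpleGraph

open SimpleGraph in
theorem stmt_13_general {V : Type*} (G : SimpleGraph V) (a b : V)
    (G' : SimpleGraph V) (hG' : G' = G.deleteEdges {s(a, b)}) (v u : V)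
    (hv : G.dist v a + 1 = G.dist v b) (hu : G.dist u a + 1 = G.dist u b) :
    G'.edist v u = G.edist v u ∧ spc G' v u = spc G v u := by
  subst hG'
  have hshort : ∀ p : G.Walk v u, p.length = G.dist v u →
      ∀ e ∈ p.edges, e ∈ (G.deleteEdges {s(a, b)}).edgeSet := fun p hp e he => by
    have hab := p.mk_notMem_edges_of_length_eq_dist hv hu hp
    rw [edgeSet_deleteEdges]
    exact ⟨p.edges_subset_edgeSet he, fun h => hab (Set.mem_singleton_iff.mp h ▸ he)⟩
  exact ⟨edist_eq_of_forall_shortest_walk_edges_mem (G.deleteEdges_le _) hshort,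
    spc_eq_of_forall_shortest_walk_edges_mem (G.deleteEdges_le _) hshort⟩

theorem stmt_13 {V : Type*} (G : SimpleGraph V) (a b : V) (hadj : G.Adj a b)
    (G' : SimpleGraph V) (hG' : G' = G.deleteEdges {s(a, b)}) (v u : V)
    (hrv : G.Reachable v a) (hru : G.Reachable u a)
    (hv : G.dist v a + 1 = G.dist v b) (hu : G.dist u a + 1 = G.dist u b) :
    G'.edist v u = G.edist v u ∧ spc G' v u = spc G v u :=
  stmt_13_general G a b G' hG' v u hv hu
end

section
/- Hub labeling soundness: let ≤ be a linear order (ranking) on the vertices of a connected graph G, and for vertices h, v let σ(h,v) be the number of shortest paths between h and v on which h is the minimum (highest-ranked) vertex. Then for any two vertices s, t, the number of shortest paths between s and t equals the sum, over all vertices h with dist(h,s) + dist(h,t) = dist(s,t), of σ(h,s)·σ(h,t). -/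
/-- The number of shortest paths between `h` and `v` in `G` on which `h` is the
minimum (highest-ranked) vertex. -/
noncomputable def sigma' {V : Type*} [LinearOrder V] (G : SimpleGraph V) (h v : V) : ℕ :=
  {p : G.Walk h v | p.IsPath ∧ p.length = G.dist h v ∧ ∀ x ∈ p.support, h ≤ x}.ncard

private lemma ncard_prod' {α β : Type*} (A : Set α) (B : Set β) :
    (A ×ˢ B).ncard = A.ncard * B.ncard := by
  rw [← Nat.card_coe_set_eq, ← Nat.card_coe_set_eq, ← Nat.card_coe_set_eq,
    Nat.card_congr (Equiv.Set.prod A B), Nat.card_prod]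

private lemma ncard_finset_biUnion {α β : Type*} (H : Finset α) (F : α → Set β) :
    (∀ a ∈ H, (F a).Finite) →
    (∀ a ∈ H, ∀ b ∈ H, a ≠ b → Disjoint (F a) (F b)) →
    (⋃ a ∈ H, F a).ncard = ∑ a ∈ H, (F a).ncard := by
  classical
  induction H using Finset.induction_on with
  | empty => simp
  | @insert a s ha ih =>
    intro hfin hdisj
    have hfin' : ∀ b ∈ s, (F b).Finite := fun b hb => hfin b (Finset.mem_insert_of_mem hb)
    have hdisj' : ∀ b ∈ s, ∀ c ∈ s, b ≠ c → Disjoint (F b) (F c) := fun b hb c hc =>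
      hdisj b (Finset.mem_insert_of_mem hb) c (Finset.mem_insert_of_mem hc)
    have hdis : Disjoint (F a) (⋃ x ∈ s, F x) := by
      rw [Set.disjoint_left]
      intro x hxa hxU
      simp only [Set.mem_iUnion] at hxU
      obtain ⟨b, hb, hxb⟩ := hxU
      have hne : a ≠ b := fun h => ha (h ▸ hb)
      exact (Set.disjoint_left.mp
        (hdisj a (Finset.mem_insert_self a s) b (Finset.mem_insert_of_mem hb) hne)) hxa hxb
    rw [Finset.set_biUnion_insert, Finset.sum_insert ha, ← ih hfin' hdisj']
    exact Set.ncard_union_eq hdis (hfin a (Finset.mem_insert_self a s))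
      (Set.Finite.biUnion s.finite_toSet hfin')

private lemma walk_append_inj {V : Type*} {G : SimpleGraph V} {u v w : V} (p : G.Walk u v) :
    ∀ (p' : G.Walk u v) (q q' : G.Walk v w),
      p.append q = p'.append q' → p.length = p'.length → p = p' ∧ q = q' := by
  induction p with
  | nil =>
    intro p' q q' heq hlen
    have hp' : p' = SimpleGraph.Walk.nil := by
      cases p' with
      | nil => rfl
      | cons _ _ => simp at hlen
    subst hp'
    simpa using heq
  | cons ha p ih =>
    intro p' q q' heq hlen
    cases p' with
    | nil => simp at hlen
    | cons ha' p'' =>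
      rw [SimpleGraph.Walk.cons_append, SimpleGraph.Walk.cons_append,
        SimpleGraph.Walk.cons.injEq] at heq
      obtain ⟨hx, hpq⟩ := heq
      subst hx
      rw [heq_iff_eq] at hpq
      simp only [SimpleGraph.Walk.length_cons, add_left_inj] at hlen
      obtain ⟨h1, h2⟩ := ih p'' q q' hpq hlen
      exact ⟨by rw [h1], h2⟩

theorem stmt_15 {V : Type*} [Fintype V] [LinearOrder V]
    (G : SimpleGraph V) (hconn : G.Connected) (s t : V) :
    spc G s t =
      ∑ h ∈ Finset.univ.filter (fun h => G.dist h s + G.dist h t = G.dist s t),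
        sigma' G h s * sigma' G h t := by
  classical
  haveI : G.LocallyFinite := fun v => Fintype.ofFinite _
  -- finiteness of walk sets of given length
  have hfinlen : ∀ (u v : V) (n : ℕ), {p : G.Walk u v | p.length = n}.Finite := by
    intro u v n
    rw [← SimpleGraph.coe_finsetWalkLength_eq]
    exact (G.finsetWalkLength n u v).finite_toSet
  set H : Finset V := Finset.univ.filter (fun h => G.dist h s + G.dist h t = G.dist s t) with hHdef
  set A : ∀ h : V, Set (G.Walk h s) := fun h =>
    {p : G.Walk h s | p.IsPath ∧ p.length = G.dist h s ∧ ∀ x ∈ p.support, h ≤ x} with hAdef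
  set B : ∀ h : V, Set (G.Walk h t) := fun h =>
    {p : G.Walk h t | p.IsPath ∧ p.length = G.dist h t ∧ ∀ x ∈ p.support, h ≤ x} with hBdef
  set F : V → Set (G.Walk s t) := fun h =>
    (fun pq : G.Walk h s × G.Walk h t => pq.1.reverse.append pq.2) '' ((A h) ×ˢ (B h))
    with hFdef
  have hAfin : ∀ h, (A h).Finite := fun h =>
    (hfinlen h s (G.dist h s)).subset (fun p hp => hp.2.1)
  have hBfin : ∀ h, (B h).Finite := fun h =>
    (hfinlen h t (G.dist h t)).subset (fun p hp => hp.2.1)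
  have hFfin : ∀ h, (F h).Finite := fun h =>
    (((hAfin h).prod (hBfin h)).image _)
  -- membership facts for F h
  have hFmem : ∀ h (r : G.Walk s t), r ∈ F h →
      (h ∈ r.support ∧ ∀ x ∈ r.support, h ≤ x) ∧
        r.length = G.dist h s + G.dist h t := by
    rintro h r ⟨⟨p, q⟩, ⟨hp, hq⟩, rfl⟩
    obtain ⟨hp1, hp2, hp3⟩ := hp
    obtain ⟨hq1, hq2, hq3⟩ := hq
    refine ⟨⟨?_, ?_⟩, ?_⟩
    · rw [SimpleGraph.Walk.mem_support_append_iff]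
      left
      rw [SimpleGraph.Walk.support_reverse, List.mem_reverse]
      exact p.start_mem_support
    · intro x hx
      rw [SimpleGraph.Walk.mem_support_append_iff] at hx
      rcases hx with hx | hx
      · rw [SimpleGraph.Walk.support_reverse, List.mem_reverse] at hx
        exact hp3 x hx
      · exact hq3 x hx
    · rw [SimpleGraph.Walk.length_append, SimpleGraph.Walk.length_reverse, hp2, hq2]
  -- key decomposition
  have hkey : {p : G.Walk s t | p.IsPath ∧ p.length = G.dist s t} = ⋃ h ∈ H, F h := by
    ext r
    simp only [Set.mem_iUnion, Set.mem_setOf_eq, exists_prop]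
    constructor
    · rintro ⟨hr, hlen⟩
      have hne : r.support.toFinset.Nonempty :=
        ⟨s, by rw [List.mem_toFinset]; exact r.start_mem_support⟩
      set h : V := r.support.toFinset.min' hne with hhdef
      have hh : h ∈ r.support := by
        rw [← List.mem_toFinset]; exact r.support.toFinset.min'_mem hne
      have hmin : ∀ x ∈ r.support, h ≤ x := fun x hx =>
        r.support.toFinset.min'_le x (by rwa [List.mem_toFinset])
      have hsum : (r.takeUntil h hh).length + (r.dropUntil h hh).length = r.length := by
        have := congrArg SimpleGraph.Walk.length (r.take_spec hh)
        rwa [SimpleGraph.Walk.length_append] at this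
      have hd1 : G.dist s h ≤ (r.takeUntil h hh).length := SimpleGraph.dist_le _
      have hd2 : G.dist h t ≤ (r.dropUntil h hh).length := SimpleGraph.dist_le _
      have htri : G.dist s t ≤ G.dist s h + G.dist h t := hconn.dist_triangle
      have he1 : (r.takeUntil h hh).length = G.dist s h := by omega
      have he2 : (r.dropUntil h hh).length = G.dist h t := by omega
      have hdistsum : G.dist h s + G.dist h t = G.dist s t := by
        rw [SimpleGraph.dist_comm (u := h) (v := s)]; omega
      refine ⟨h, ?_, ?_⟩
      · rw [hHdef, Finset.mem_filter]
        exact ⟨Finset.mem_univ h, hdistsum⟩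
      · refine ⟨((r.takeUntil h hh).reverse, r.dropUntil h hh), ⟨⟨?_, ?_, ?_⟩, ?_, ?_, ?_⟩, ?_⟩
        · exact (hr.takeUntil hh).reverse
        · rw [SimpleGraph.Walk.length_reverse, he1, SimpleGraph.dist_comm]
        · intro x hx
          rw [SimpleGraph.Walk.support_reverse, List.mem_reverse] at hx
          exact hmin x (r.support_takeUntil_subset hh hx)
        · exact hr.dropUntil hh
        · exact he2
        · exact fun x hx => hmin x (r.support_dropUntil_subset hh hx)
        · simp only [SimpleGraph.Walk.reverse_reverse]
          exact r.take_spec hh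
    · rintro ⟨h, hH, hrF⟩
      have := hFmem h r hrF
      rw [hHdef, Finset.mem_filter] at hH
      have hlen : r.length = G.dist s t := by rw [this.2, hH.2]
      exact ⟨r.isPath_of_length_eq_dist hlen, hlen⟩
  rw [spc, hkey, ncard_finset_biUnion H F (fun a _ => hFfin a) ?_]
  · refine Finset.sum_congr rfl (fun h _ => ?_)
    have hinj : Set.InjOn (fun pq : G.Walk h s × G.Walk h t => pq.1.reverse.append pq.2)
        ((A h) ×ˢ (B h)) := by
      rintro ⟨p1, q1⟩ ⟨hp1, hq1⟩ ⟨p2, q2⟩ ⟨hp2, hq2⟩ heq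
      have hlen : p1.reverse.length = p2.reverse.length := by
        rw [SimpleGraph.Walk.length_reverse, SimpleGraph.Walk.length_reverse,
          hp1.2.1, hp2.2.1]
      obtain ⟨h1, h2⟩ := walk_append_inj p1.reverse p2.reverse q1 q2 heq hlen
      have : p1 = p2 := by
        have := congrArg SimpleGraph.Walk.reverse h1
        rwa [SimpleGraph.Walk.reverse_reverse, SimpleGraph.Walk.reverse_reverse] at this
      exact Prod.ext this h2
    rw [hFdef]
    simp only
    rw [Set.ncard_image_of_injOn hinj, ncard_prod']
    rfl
  · intro a _ b _ hab
    rw [Set.disjoint_left]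
    intro r hra hrb
    have h1 := (hFmem a r hra).1
    have h2 := (hFmem b r hrb).1
    exact hab (le_antisymm (h1.2 b h2.1) (h2.2 a h1.1))
end

section
/- If G' is obtained from G by inserting edge (a,b), then for all vertices v, u: dist_{G'}(v,u) = min(dist_G(v,u), dist_G(v,a) + 1 + dist_G(b,u), dist_G(v,b) + 1 + dist_G(a,u)). -/
/-! The detour distance `x ↦ min (d x u) (d x a + 1 + d b u) (d x b + 1 + d a u)`, with `d` the
distance in `G`, vanishes at `u` and drops by at most one along every edge of `G ⊔ edge a b`;
hence it is a lower bound for the distance to `u` in the enlarged graph. The triangle inequality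
in the enlarged graph, where `a` and `b` are at distance at most one, gives the upper bound. -/

namespace SimpleGraph

variable {V : Type*}

lemma le_add_edist_of_forall_adj (H : SimpleGraph V) (f : V → ℕ∞)
    (hf : ∀ x y, H.Adj x y → f x ≤ f y + 1) (x y : V) : f x ≤ f y + H.edist x y := by
  by_cases htop : H.edist x y = ⊤
  · simp [htop]
  obtain ⟨p, hp⟩ := exists_walk_of_edist_ne_top htop
  rw [← hp]
  clear hp htop
  induction p with
  | nil => simp
  | @cons x z y hxz q ih =>
    calc f x ≤ f z + 1 := hf x z hxz
      _ ≤ f y + q.length + 1 := by gcongr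
      _ = f y + (q.cons hxz).length := by rw [Walk.length_cons]; push_cast; ring

lemma edist_sup_edge_le_one (G : SimpleGraph V) (a b : V) : (G ⊔ edge a b).edist a b ≤ 1 := by
  rw [edist_le_one_iff_adj_or_eq]
  by_cases hab : a = b
  · exact .inr hab
  · exact .inl (.inr ((edge_adj a b a b).mpr ⟨.inl ⟨rfl, rfl⟩, hab⟩))

variable (G : SimpleGraph V) (a b u : V)

noncomputable def edistViaEdge (x : V) : ℕ∞ :=
  min (G.edist x u) (min (G.edist x a + 1 + G.edist b u) (G.edist x b + 1 + G.edist a u))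

lemma edistViaEdge_self : G.edistViaEdge a b u u = 0 := by
  simp [edistViaEdge]

lemma edistViaEdge_swap (x : V) : G.edistViaEdge b a u x = G.edistViaEdge a b u x := by
  simp only [edistViaEdge, min_comm (G.edist x b + 1 + G.edist a u)]

lemma edistViaEdge_le_of_adj {x y : V} (h : G.Adj x y) :
    G.edistViaEdge a b u x ≤ G.edistViaEdge a b u y + 1 := by
  have step (w : V) : G.edist x w ≤ G.edist y w + 1 :=
    calc G.edist x w ≤ G.edist x y + G.edist y w := G.edist_triangle
      _ = G.edist y w + 1 := by rw [edist_eq_one_iff_adj.mpr h, add_comm]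
  simp only [edistViaEdge, ← min_add_add_right]
  refine min_le_min (step u) (min_le_min ?_ ?_)
  · calc G.edist x a + 1 + G.edist b u ≤ G.edist y a + 1 + 1 + G.edist b u := by
          gcongr; exact step a
      _ = _ := by ring
  · calc G.edist x b + 1 + G.edist a u ≤ G.edist y b + 1 + 1 + G.edist a u := by
          gcongr; exact step b
      _ = _ := by ring

lemma edistViaEdge_left_le_right :
    G.edistViaEdge a b u a ≤ G.edistViaEdge a b u b + 1 := by
  have hvia : G.edistViaEdge a b u a ≤ G.edist b u + 1 :=
    calc G.edistViaEdge a b u a ≤ G.edist a a + 1 + G.edist b u :=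
          (min_le_right _ _).trans (min_le_left _ _)
      _ = G.edist b u + 1 := by rw [edist_self, zero_add, add_comm]
  have hdirect : G.edistViaEdge a b u a ≤ G.edist a u := min_le_left _ _
  calc G.edistViaEdge a b u a
      ≤ min (G.edist b u + 1)
          (min (G.edist b a + 1 + G.edist b u + 1) (G.edist b b + 1 + G.edist a u + 1)) := by
        refine le_min hvia (le_min (hvia.trans ?_) (hdirect.trans ?_))
        · calc G.edist b u + 1 ≤ (G.edist b a + 1) + (G.edist b u + 1) := le_add_self
            _ = _ := by ring
        · calc G.edist a u ≤ (G.edist b b + 1 + 1) + G.edist a u := le_add_self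
            _ = _ := by ring
    _ = G.edistViaEdge a b u b + 1 := by simp only [edistViaEdge, min_add_add_right]

lemma edistViaEdge_le_of_sup_edge_adj {x y : V} (h : (G ⊔ edge a b).Adj x y) :
    G.edistViaEdge a b u x ≤ G.edistViaEdge a b u y + 1 := by
  rcases h with hG | he
  · exact G.edistViaEdge_le_of_adj a b u hG
  rcases ((edge_adj a b x y).mp he).1 with ⟨rfl, rfl⟩ | ⟨rfl, rfl⟩
  · exact G.edistViaEdge_left_le_right x y u
  · simpa only [edistViaEdge_swap] using G.edistViaEdge_left_le_right x y u

lemma edistViaEdge_le_edist_sup_edge (x : V) :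
    G.edistViaEdge a b u x ≤ (G ⊔ edge a b).edist x u := by
  simpa [edistViaEdge_self] using
    le_add_edist_of_forall_adj _ _ (fun _ _ ↦ G.edistViaEdge_le_of_sup_edge_adj a b u) x u

lemma edist_sup_edge_le_edistViaEdge (x : V) :
    (G ⊔ edge a b).edist x u ≤ G.edistViaEdge a b u x := by
  set G' := G ⊔ edge a b
  have hle : G ≤ G' := le_sup_left
  have detour (s t : V) (hst : G'.edist s t ≤ 1) :
      G'.edist x u ≤ G.edist x s + 1 + G.edist t u :=
    calc G'.edist x u ≤ G'.edist x s + G'.edist s u := G'.edist_triangle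
      _ ≤ G'.edist x s + (G'.edist s t + G'.edist t u) := by gcongr; exact G'.edist_triangle
      _ = G'.edist x s + G'.edist s t + G'.edist t u := (add_assoc ..).symm
      _ ≤ G.edist x s + 1 + G.edist t u := by gcongr
  refine le_min (edist_anti hle) (le_min (detour a b ?_) (detour b a ?_))
  · exact G.edist_sup_edge_le_one a b
  · rw [edist_comm]; exact G.edist_sup_edge_le_one a b

end SimpleGraph

theorem stmt_18_general {V : Type*} (G : SimpleGraph V) (a b : V)
    (G' : SimpleGraph V) (hG' : G' = G ⊔ SimpleGraph.edge a b) (v u : V) :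
    G'.edist v u =
      min (G.edist v u)
        (min (G.edist v a + 1 + G.edist b u) (G.edist v b + 1 + G.edist a u)) := by
  subst hG'
  exact le_antisymm (G.edist_sup_edge_le_edistViaEdge a b u v)
    (G.edistViaEdge_le_edist_sup_edge a b u v)

theorem stmt_18 {V : Type*} (G : SimpleGraph V) (a b : V) (hab : a ≠ b)
    (G' : SimpleGraph V) (hG' : G' = G ⊔ SimpleGraph.edge a b) (v u : V) :
    G'.edist v u =
      min (G.edist v u)
        (min (G.edist v a + 1 + G.edist b u) (G.edist v b + 1 + G.edist a u)) :=
  stmt_18_general G a b G' hG' v u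
end
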